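/- Let u(x,t) = α(t) u₀(x) be a directionally steady flow with α continuous and positive, whose flow map is F_{t₀}^t(x₀) = G^{∫_{t₀}^t α}(x₀). Then the time-averaged pullback barrier field b(x₀) := (1/(t₁−t₀)) ∫_{t₀}^{t₁} (DF_{t₀}^t(x₀))^{-1} (c(t) u₀(F_{t₀}^t(x₀))) dt equals ((1/(t₁−t₀)) ∫_{t₀}^{t₁} c(t) dt) · u₀(x₀), for any continuous scalar function c(t). In particular b is a scalar multiple of u₀ and has the same integral curves (up to reparametrization) whenever the scalar is nonzero. -/

import Mathlib

/-- For a directionally steady flow `u (x,t) = α t • u₀ x` with flow map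
`F t x₀ = G (∫_{t₀}^t α) x₀`, the time-averaged pullback barrier field
`b x₀ = (t₁−t₀)⁻¹ ∫_{t₀}^{t₁} (DF_{t₀}^t x₀)⁻¹ (c t • u₀ (F t x₀)) dt`
equals `((t₁−t₀)⁻¹ ∫_{t₀}^{t₁} c) • u₀ x₀` for any continuous scalar `c`;
in particular `b` is a scalar multiple of `u₀`. -/
theorem barrier_field_of_directionally_steady_flow {n : ℕ}
    (u₀ : EuclideanSpace ℝ (Fin n) → EuclideanSpace ℝ (Fin n))
    (hu₀ : ContDiff ℝ (⊤ : ℕ∞) u₀)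
    (G : ℝ → EuclideanSpace ℝ (Fin n) → EuclideanSpace ℝ (Fin n))
    (hG0 : ∀ x, G 0 x = x)
    (hGgroup : ∀ σ τ x, G (σ + τ) x = G σ (G τ x))
    (hGflow : ∀ τ x, HasDerivAt (fun σ => G σ x) (u₀ (G τ x)) τ)
    (hGsmooth : ∀ τ, ContDiff ℝ (⊤ : ℕ∞) (G τ))
    (α : ℝ → ℝ) (hα : Continuous α) (hαpos : ∀ t, 0 < α t)
    (c : ℝ → ℝ) (hc : Continuous c)
    (t₀ t₁ : ℝ) (ht : t₀ < t₁)
    (F : ℝ → EuclideanSpace ℝ (Fin n) → EuclideanSpace ℝ (Fin n))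
    (hF : ∀ t x₀, F t x₀ = G (∫ s in t₀..t, α s) x₀)
    (hinv : ∀ (t : ℝ) (x₀ : EuclideanSpace ℝ (Fin n)),
      ∃ e : EuclideanSpace ℝ (Fin n) ≃L[ℝ] EuclideanSpace ℝ (Fin n),
        (e : EuclideanSpace ℝ (Fin n) →L[ℝ] EuclideanSpace ℝ (Fin n)) =
          fderiv ℝ (F t) x₀)
    (b : EuclideanSpace ℝ (Fin n) → EuclideanSpace ℝ (Fin n))
    (hb : ∀ x₀, b x₀ = (t₁ - t₀)⁻¹ •
      ∫ t in t₀..t₁, (fderiv ℝ (F t) x₀).inverse (c t • u₀ (F t x₀))) :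
    ∀ x₀, b x₀ = ((t₁ - t₀)⁻¹ * ∫ t in t₀..t₁, c t) • u₀ x₀ := by
  intro x₀
  -- Step 1: the flow-pullback identity DG^τ(x₀) (u₀ x₀) = u₀ (G τ x₀)
  have key : ∀ τ, fderiv ℝ (G τ) x₀ (u₀ x₀) = u₀ (G τ x₀) := by
    intro τ
    have hA : HasDerivAt (fun σ => G (τ + σ) x₀) (u₀ (G τ x₀)) 0 := by
      have h1 : HasDerivAt (fun σ : ℝ => τ + σ) 1 0 := by
        simpa using (hasDerivAt_id (0 : ℝ)).const_add τ
      have h2 : HasDerivAt (fun σ => G σ x₀) (u₀ (G τ x₀)) (τ + 0) := by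
        simpa using hGflow τ x₀
      simpa [Function.comp_def] using h2.scomp (x := (0:ℝ)) h1
    have hB : HasDerivAt (fun σ => G τ (G σ x₀)) (fderiv ℝ (G τ) x₀ (u₀ x₀)) 0 := by
      have hfd : HasFDerivAt (G τ) (fderiv ℝ (G τ) x₀) (G 0 x₀) := by
        rw [hG0]
        exact ((hGsmooth τ).differentiable (by simp) x₀).hasFDerivAt
      have h0 : HasDerivAt (fun σ => G σ x₀) (u₀ (G 0 x₀)) 0 := hGflow 0 x₀
      simpa [hG0, Function.comp_def] using hfd.comp_hasDerivAt 0 h0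
    have hAB : (fun σ => G (τ + σ) x₀) = fun σ => G τ (G σ x₀) := by
      funext σ; exact hGgroup τ σ x₀
    rw [hAB] at hA
    exact (hB.unique hA)
  -- Step 2: per-time identity for the integrand
  have integrand : ∀ t,
      (fderiv ℝ (F t) x₀).inverse (c t • u₀ (F t x₀)) = c t • u₀ x₀ := by
    intro t
    obtain ⟨e, he⟩ := hinv t x₀
    set τ := ∫ s in t₀..t, α s with hτ
    have hFt : F t = G τ := funext fun x => hF t x
    have hfd : fderiv ℝ (F t) x₀ (u₀ x₀) = u₀ (F t x₀) := by
      rw [hFt]; exact key τ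
    have he' : e (u₀ x₀) = u₀ (F t x₀) := by
      have := congrArg (fun L : EuclideanSpace ℝ (Fin n) →L[ℝ] EuclideanSpace ℝ (Fin n) =>
        L (u₀ x₀)) he
      simpa [hfd] using this
    rw [← he, ContinuousLinearMap.inverse_equiv, map_smul]
    have : e.symm (u₀ (F t x₀)) = u₀ x₀ := by
      rw [← he']; exact e.symm_apply_apply _
    exact congrArg (fun v => c t • v) this
  -- Step 3: compute the integral
  rw [hb x₀]
  have : (∫ t in t₀..t₁, (fderiv ℝ (F t) x₀).inverse (c t • u₀ (F t x₀)))
      = ∫ t in t₀..t₁, c t • u₀ x₀ := by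
    congr 1; funext t; exact integrand t
  rw [this, intervalIntegral.integral_smul_const, smul_smul]
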